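/- Let Λ_1, Γ_1 be quantum channels on ℂ^d and Λ_2, Γ_2 be quantum channels on ℂ^{d'}. Let Λ_1 ⊗ Λ_2 denote the quantum channel on ℂ^{dd'} determined by (Λ_1 ⊗ Λ_2)(A ⊗ B) = Λ_1(A) ⊗ Λ_2(B) on Kronecker products, and similarly for Γ_1 ⊗ Γ_2. Then d_av^ch(Λ_1 ⊗ Λ_2, Γ_1 ⊗ Γ_2) ≤ d_av^ch(Λ_1, Γ_1) + d_av^ch(Λ_2, Γ_2). -/

import Mathlib

open Matrix Kronecker ComplexOrder

/-- The Hilbert–Schmidt (Frobenius) norm of a complex matrix. -/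
noncomputable def hsNorm {n : Type*} [Fintype n] (A : Matrix n n ℂ) : ℝ :=
  Real.sqrt ((Matrix.trace (Aᴴ * A)).re)

/-- The (normalized) Choi matrix `J_Λ = (1/d) ∑ᵢⱼ E_ij ⊗ Λ(E_ij)` of a linear map on matrices. -/
noncomputable def choi {n : Type*} [Fintype n] [DecidableEq n]
    (Λ : Matrix n n ℂ →ₗ[ℂ] Matrix n n ℂ) : Matrix (n × n) (n × n) ℂ :=
  ((Fintype.card n : ℂ))⁻¹ •
    ∑ i, ∑ j, (Matrix.single i j (1 : ℂ)) ⊗ₖ Λ (Matrix.single i j (1 : ℂ))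

/-- A quantum channel: a completely positive (positive semidefinite Choi matrix)
trace-preserving linear map. -/
def IsChannel {n : Type*} [Fintype n] [DecidableEq n]
    (Λ : Matrix n n ℂ →ₗ[ℂ] Matrix n n ℂ) : Prop :=
  (choi Λ).PosSemidef ∧ ∀ X, (Λ X).trace = X.trace

/-- The average-case distance between quantum channels,
`(1/2) √(‖J_Λ − J_Γ‖_HS² + ‖(Λ−Γ)(I/d)‖_HS²)`. -/
noncomputable def davCh {n : Type*} [Fintype n] [DecidableEq n]
    (Λ Γ : Matrix n n ℂ →ₗ[ℂ] Matrix n n ℂ) : ℝ :=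
  (1 / 2) * Real.sqrt ((hsNorm (choi Λ - choi Γ)) ^ 2 +
    (hsNorm (Λ (((Fintype.card n : ℂ))⁻¹ • 1) - Γ (((Fintype.card n : ℂ))⁻¹ • 1))) ^ 2)

/-!
Both terms of `d_av^ch` are Hilbert–Schmidt distances between Kronecker products: the Choi
matrix of `Λ₁ ⊗ Λ₂` is a reindexing of `J_{Λ₁} ⊗ J_{Λ₂}`, and `(Λ₁ ⊗ Λ₂)(I/dd')` is
`Λ₁(I/d) ⊗ Λ₂(I/d')`. Since `A ⊗ B - C ⊗ D = (A - C) ⊗ B + C ⊗ (B - D)` and the HS norm is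
multiplicative on Kronecker products, each term is at most the sum of the corresponding terms of
the factors, as soon as `‖B‖, ‖C‖ ≤ 1`. This holds for Choi matrices of channels and for
`Λ(I/d) = Tr₁ J_Λ`: both are positive semidefinite of trace at most one, and the HS norm of a
positive semidefinite matrix is at most its trace. Minkowski's inequality in `ℝ²` combines the
two terms.
-/

lemma Matrix.PosSemidef.norm_apply_sq_le {n : Type*} {A : Matrix n n ℂ} (hA : A.PosSemidef)
    (i j : n) : ‖A i j‖ ^ 2 ≤ (A i i).re * (A j j).re := by
  have hminor : 0 ≤ A i i * A j j - A i j * A j i := by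
    have h := (hA.submatrix ![i, j]).det_nonneg
    rw [det_fin_two] at h
    simpa using h
  have hji : A j i = starRingEnd ℂ (A i j) := (hA.isHermitian.apply j i).symm
  obtain ⟨-, hii⟩ := Complex.nonneg_iff.mp (hA.diag_nonneg (i := i))
  obtain ⟨-, hjj⟩ := Complex.nonneg_iff.mp (hA.diag_nonneg (i := j))
  rw [hji, Complex.mul_conj, Complex.nonneg_iff, Complex.sub_re, Complex.mul_re, ← hii, ← hjj,
    Complex.ofReal_re, Complex.normSq_eq_norm_sq] at hminor
  linarith [hminor.1]

section HilbertSchmidt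

attribute [local instance] Matrix.frobeniusNormedAddCommGroup

variable {n m : Type*} [Fintype n] [Fintype m]

lemma hsNorm_eq_sqrt_sum (A : Matrix n n ℂ) : hsNorm A = √(∑ i, ∑ j, ‖A i j‖ ^ 2) := by
  rw [hsNorm, trace, Finset.sum_comm, Complex.re_sum]
  congr 1
  refine Finset.sum_congr rfl fun i _ => ?_
  simp [mul_apply, Complex.re_sum, ← Complex.normSq_eq_norm_sq, Complex.normSq_apply]

lemma hsNorm_sq (A : Matrix n n ℂ) : hsNorm A ^ 2 = ∑ i, ∑ j, ‖A i j‖ ^ 2 := by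
  rw [hsNorm_eq_sqrt_sum, Real.sq_sqrt (by positivity)]

lemma hsNorm_nonneg (A : Matrix n n ℂ) : 0 ≤ hsNorm A := Real.sqrt_nonneg _

lemma hsNorm_eq_frobenius_norm (A : Matrix n n ℂ) : hsNorm A = ‖A‖ := by
  rw [hsNorm_eq_sqrt_sum, frobenius_norm_def, Real.sqrt_eq_rpow]
  norm_cast

lemma hsNorm_add_le (A B : Matrix n n ℂ) : hsNorm (A + B) ≤ hsNorm A + hsNorm B := by
  simpa only [hsNorm_eq_frobenius_norm] using norm_add_le A B

lemma hsNorm_kronecker (A : Matrix n n ℂ) (B : Matrix m m ℂ) :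
    hsNorm (A ⊗ₖ B) = hsNorm A * hsNorm B := by
  rw [← sq_eq_sq₀ (hsNorm_nonneg _) (mul_nonneg (hsNorm_nonneg _) (hsNorm_nonneg _)), mul_pow,
    hsNorm_sq, hsNorm_sq, hsNorm_sq, Finset.sum_mul_sum]
  simp only [Fintype.sum_prod_type, kronecker_apply, norm_mul, mul_pow, Finset.sum_mul_sum]

lemma hsNorm_submatrix_equiv (A : Matrix n n ℂ) (e : m ≃ n) :
    hsNorm (A.submatrix e e) = hsNorm A := by
  simp only [hsNorm_eq_sqrt_sum, submatrix_apply]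
  rw [← e.sum_comp (fun i => ∑ j, ‖A i j‖ ^ 2)]
  simp only [fun i => e.sum_comp (fun j => ‖A (e i) j‖ ^ 2)]

lemma Matrix.PosSemidef.hsNorm_le_re_trace {A : Matrix n n ℂ} (hA : A.PosSemidef) :
    hsNorm A ≤ A.trace.re := by
  have hdiag : ∀ i, 0 ≤ (A i i).re := fun i => (Complex.nonneg_iff.mp hA.diag_nonneg).1
  have hre : A.trace.re = ∑ i, (A i i).re := Complex.re_sum _ _
  rw [hsNorm_eq_sqrt_sum, Real.sqrt_le_iff, hre, sq, Finset.sum_mul_sum]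
  exact ⟨Finset.sum_nonneg fun i _ => hdiag i,
    Finset.sum_le_sum fun i _ => Finset.sum_le_sum fun j _ => hA.norm_apply_sq_le i j⟩

lemma hsNorm_kronecker_sub_kronecker_le (A C : Matrix n n ℂ) (B D : Matrix m m ℂ)
    (hB : hsNorm B ≤ 1) (hC : hsNorm C ≤ 1) :
    hsNorm (A ⊗ₖ B - C ⊗ₖ D) ≤ hsNorm (A - C) + hsNorm (B - D) := by
  have hsplit : A ⊗ₖ B - C ⊗ₖ D = (A - C) ⊗ₖ B + C ⊗ₖ (B - D) := by
    ext ⟨i, k⟩ ⟨j, l⟩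
    simp only [Matrix.sub_apply, Matrix.add_apply, kronecker_apply]
    ring
  calc hsNorm (A ⊗ₖ B - C ⊗ₖ D)
      ≤ hsNorm (A - C) * hsNorm B + hsNorm C * hsNorm (B - D) := by
        rw [hsplit, ← hsNorm_kronecker, ← hsNorm_kronecker]; exact hsNorm_add_le _ _
    _ ≤ hsNorm (A - C) + hsNorm (B - D) := by
        gcongr
        · exact mul_le_of_le_one_right (hsNorm_nonneg _) hB
        · exact mul_le_of_le_one_left (hsNorm_nonneg _) hC

end HilbertSchmidt

def partialTraceFst {n m : Type*} [Fintype n] (M : Matrix (n × m) (n × m) ℂ) : Matrix m m ℂ :=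
  ∑ k, M.submatrix (Prod.mk k) (Prod.mk k)

lemma partialTraceFst_apply {n m : Type*} [Fintype n] (M : Matrix (n × m) (n × m) ℂ) (a b : m) :
    partialTraceFst M a b = ∑ k, M (k, a) (k, b) := by
  simp [partialTraceFst, Matrix.sum_apply]

lemma Matrix.PosSemidef.partialTraceFst {n m : Type*} [Fintype n] {M : Matrix (n × m) (n × m) ℂ}
    (hM : M.PosSemidef) : (partialTraceFst M).PosSemidef :=
  posSemidef_sum _ fun _ _ => hM.submatrix _

lemma trace_partialTraceFst {n m : Type*} [Fintype n] [Fintype m] (M : Matrix (n × m) (n × m) ℂ) :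
    (partialTraceFst M).trace = M.trace := by
  simp only [trace, diag, partialTraceFst_apply, Fintype.sum_prod_type]
  exact Finset.sum_comm

section Channel

variable {n m : Type*} [Fintype n] [DecidableEq n] [Fintype m] [DecidableEq m]

lemma choi_apply (Λ : Matrix n n ℂ →ₗ[ℂ] Matrix n n ℂ) (i j i' j' : n) :
    choi Λ (i, j) (i', j') = (Fintype.card n : ℂ)⁻¹ * Λ (single i i' 1) j j' := by
  simp [choi, Matrix.sum_apply, single_apply, ite_and]

lemma partialTraceFst_choi (Λ : Matrix n n ℂ →ₗ[ℂ] Matrix n n ℂ) :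
    partialTraceFst (choi Λ) = Λ ((Fintype.card n : ℂ)⁻¹ • 1) := by
  ext a b
  simp only [partialTraceFst_apply, choi_apply, ← Finset.mul_sum, ← Matrix.sum_apply, ← map_sum,
    sum_single_one, map_smul, Matrix.smul_apply, smul_eq_mul]

lemma IsChannel.posSemidef_apply_maximallyMixed {Λ : Matrix n n ℂ →ₗ[ℂ] Matrix n n ℂ}
    (hΛ : IsChannel Λ) : (Λ ((Fintype.card n : ℂ)⁻¹ • 1)).PosSemidef :=
  partialTraceFst_choi Λ ▸ hΛ.1.partialTraceFst

lemma IsChannel.re_trace_apply_maximallyMixed_le_one {Λ : Matrix n n ℂ →ₗ[ℂ] Matrix n n ℂ}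
    (hΛ : IsChannel Λ) : (Λ ((Fintype.card n : ℂ)⁻¹ • 1)).trace.re ≤ 1 := by
  rw [hΛ.2, trace_smul, trace_one, smul_eq_mul]
  rcases eq_or_ne (Fintype.card n) 0 with h | h <;> simp [h]

lemma IsChannel.hsNorm_apply_maximallyMixed_le_one {Λ : Matrix n n ℂ →ₗ[ℂ] Matrix n n ℂ}
    (hΛ : IsChannel Λ) : hsNorm (Λ ((Fintype.card n : ℂ)⁻¹ • 1)) ≤ 1 :=
  hΛ.posSemidef_apply_maximallyMixed.hsNorm_le_re_trace.trans
    hΛ.re_trace_apply_maximallyMixed_le_one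

lemma IsChannel.hsNorm_choi_le_one {Λ : Matrix n n ℂ →ₗ[ℂ] Matrix n n ℂ} (hΛ : IsChannel Λ) :
    hsNorm (choi Λ) ≤ 1 := by
  refine hΛ.1.hsNorm_le_re_trace.trans ?_
  rw [← trace_partialTraceFst, partialTraceFst_choi]
  exact hΛ.re_trace_apply_maximallyMixed_le_one

lemma choi_eq_of_apply_kronecker {Λ₁ : Matrix n n ℂ →ₗ[ℂ] Matrix n n ℂ}
    {Λ₂ : Matrix m m ℂ →ₗ[ℂ] Matrix m m ℂ}
    {Λ : Matrix (n × m) (n × m) ℂ →ₗ[ℂ] Matrix (n × m) (n × m) ℂ}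
    (h : ∀ A B, Λ (A ⊗ₖ B) = Λ₁ A ⊗ₖ Λ₂ B) :
    choi Λ = (choi Λ₁ ⊗ₖ choi Λ₂).submatrix (Equiv.prodProdProdComm n m n m)
      (Equiv.prodProdProdComm n m n m) := by
  ext ⟨⟨i, a⟩, ⟨j, b⟩⟩ ⟨⟨i', a'⟩, ⟨j', b'⟩⟩
  have hsingle : single (i, a) (i', a') (1 : ℂ) = single i i' 1 ⊗ₖ single a a' 1 := by
    rw [single_kronecker_single, mul_one]
  simp only [submatrix_apply, Equiv.prodProdProdComm_apply, kronecker_apply, choi_apply, hsingle,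
    h, Fintype.card_prod]
  push_cast
  ring

lemma hsNorm_choi_sub_choi_of_apply_kronecker {Λ₁ Γ₁ : Matrix n n ℂ →ₗ[ℂ] Matrix n n ℂ}
    {Λ₂ Γ₂ : Matrix m m ℂ →ₗ[ℂ] Matrix m m ℂ}
    {Λ Γ : Matrix (n × m) (n × m) ℂ →ₗ[ℂ] Matrix (n × m) (n × m) ℂ}
    (hΛ : ∀ A B, Λ (A ⊗ₖ B) = Λ₁ A ⊗ₖ Λ₂ B) (hΓ : ∀ A B, Γ (A ⊗ₖ B) = Γ₁ A ⊗ₖ Γ₂ B) :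
    hsNorm (choi Λ - choi Γ) = hsNorm (choi Λ₁ ⊗ₖ choi Λ₂ - choi Γ₁ ⊗ₖ choi Γ₂) := by
  rw [choi_eq_of_apply_kronecker hΛ, choi_eq_of_apply_kronecker hΓ,
    ← hsNorm_submatrix_equiv _ (Equiv.prodProdProdComm n m n m)]
  rfl

lemma apply_maximallyMixed_of_apply_kronecker {Λ₁ : Matrix n n ℂ →ₗ[ℂ] Matrix n n ℂ}
    {Λ₂ : Matrix m m ℂ →ₗ[ℂ] Matrix m m ℂ}
    {Λ : Matrix (n × m) (n × m) ℂ →ₗ[ℂ] Matrix (n × m) (n × m) ℂ}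
    (h : ∀ A B, Λ (A ⊗ₖ B) = Λ₁ A ⊗ₖ Λ₂ B) :
    Λ ((Fintype.card (n × m) : ℂ)⁻¹ • 1) =
      Λ₁ ((Fintype.card n : ℂ)⁻¹ • 1) ⊗ₖ Λ₂ ((Fintype.card m : ℂ)⁻¹ • 1) := by
  rw [← h, smul_kronecker, kronecker_smul, one_kronecker_one, smul_smul, Fintype.card_prod]
  push_cast
  rw [mul_inv, mul_comm]

end Channel

lemma sqrt_sq_add_sq_le_of_le {a b x₁ x₂ y₁ y₂ : ℝ} (ha : 0 ≤ a) (hb : 0 ≤ b)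
    (hax : a ≤ x₁ + x₂) (hby : b ≤ y₁ + y₂) :
    √(a ^ 2 + b ^ 2) ≤ √(x₁ ^ 2 + y₁ ^ 2) + √(x₂ ^ 2 + y₂ ^ 2) :=
  calc √(a ^ 2 + b ^ 2) ≤ √((x₁ + x₂) ^ 2 + (y₁ + y₂) ^ 2) := by gcongr
    _ = ‖(x₁ + y₁ * Complex.I) + (x₂ + y₂ * Complex.I)‖ := by
      rw [← Complex.norm_add_mul_I]; push_cast; ring_nf
    _ ≤ √(x₁ ^ 2 + y₁ ^ 2) + √(x₂ ^ 2 + y₂ ^ 2) := by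
      rw [← Complex.norm_add_mul_I, ← Complex.norm_add_mul_I]; exact norm_add_le _ _

lemma davCh_le_of_apply_kronecker {n m : Type*} [Fintype n] [DecidableEq n] [Fintype m]
    [DecidableEq m] {Λ₁ Γ₁ : Matrix n n ℂ →ₗ[ℂ] Matrix n n ℂ}
    {Λ₂ Γ₂ : Matrix m m ℂ →ₗ[ℂ] Matrix m m ℂ}
    {Λ Γ : Matrix (n × m) (n × m) ℂ →ₗ[ℂ] Matrix (n × m) (n × m) ℂ}
    (hΓ₁ : IsChannel Γ₁) (hΛ₂ : IsChannel Λ₂)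
    (hΛ : ∀ A B, Λ (A ⊗ₖ B) = Λ₁ A ⊗ₖ Λ₂ B) (hΓ : ∀ A B, Γ (A ⊗ₖ B) = Γ₁ A ⊗ₖ Γ₂ B) :
    davCh Λ Γ ≤ davCh Λ₁ Γ₁ + davCh Λ₂ Γ₂ := by
  unfold davCh
  rw [hsNorm_choi_sub_choi_of_apply_kronecker hΛ hΓ, apply_maximallyMixed_of_apply_kronecker hΛ,
    apply_maximallyMixed_of_apply_kronecker hΓ, ← mul_add]
  gcongr
  exact sqrt_sq_add_sq_le_of_le (hsNorm_nonneg _) (hsNorm_nonneg _)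
    (hsNorm_kronecker_sub_kronecker_le _ _ _ _ hΛ₂.hsNorm_choi_le_one hΓ₁.hsNorm_choi_le_one)
    (hsNorm_kronecker_sub_kronecker_le _ _ _ _ hΛ₂.hsNorm_apply_maximallyMixed_le_one
      hΓ₁.hsNorm_apply_maximallyMixed_le_one)

theorem statement12_general (d d' : ℕ)
    (Λ₁ Γ₁ : Matrix (Fin d) (Fin d) ℂ →ₗ[ℂ] Matrix (Fin d) (Fin d) ℂ)
    (Λ₂ Γ₂ : Matrix (Fin d') (Fin d') ℂ →ₗ[ℂ] Matrix (Fin d') (Fin d') ℂ)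
    (hΓ₁ : IsChannel Γ₁) (hΛ₂ : IsChannel Λ₂)
    (Λ₁₂ Γ₁₂ : Matrix (Fin d × Fin d') (Fin d × Fin d') ℂ →ₗ[ℂ]
      Matrix (Fin d × Fin d') (Fin d × Fin d') ℂ)
    (hΛ₁₂ : ∀ (A : Matrix (Fin d) (Fin d) ℂ) (B : Matrix (Fin d') (Fin d') ℂ),
      Λ₁₂ (A ⊗ₖ B) = Λ₁ A ⊗ₖ Λ₂ B)
    (hΓ₁₂ : ∀ (A : Matrix (Fin d) (Fin d) ℂ) (B : Matrix (Fin d') (Fin d') ℂ),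
      Γ₁₂ (A ⊗ₖ B) = Γ₁ A ⊗ₖ Γ₂ B) :
    davCh Λ₁₂ Γ₁₂ ≤ davCh Λ₁ Γ₁ + davCh Λ₂ Γ₂ :=
  davCh_le_of_apply_kronecker hΓ₁ hΛ₂ hΛ₁₂ hΓ₁₂

theorem statement12 (d d' : ℕ)
    (Λ₁ Γ₁ : Matrix (Fin d) (Fin d) ℂ →ₗ[ℂ] Matrix (Fin d) (Fin d) ℂ)
    (Λ₂ Γ₂ : Matrix (Fin d') (Fin d') ℂ →ₗ[ℂ] Matrix (Fin d') (Fin d') ℂ)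
    (hΛ₁ : IsChannel Λ₁) (hΓ₁ : IsChannel Γ₁) (hΛ₂ : IsChannel Λ₂) (hΓ₂ : IsChannel Γ₂)
    (Λ₁₂ Γ₁₂ : Matrix (Fin d × Fin d') (Fin d × Fin d') ℂ →ₗ[ℂ]
      Matrix (Fin d × Fin d') (Fin d × Fin d') ℂ)
    (hΛ₁₂ : ∀ (A : Matrix (Fin d) (Fin d) ℂ) (B : Matrix (Fin d') (Fin d') ℂ),
      Λ₁₂ (A ⊗ₖ B) = Λ₁ A ⊗ₖ Λ₂ B)
    (hΓ₁₂ : ∀ (A : Matrix (Fin d) (Fin d) ℂ) (B : Matrix (Fin d') (Fin d') ℂ),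
      Γ₁₂ (A ⊗ₖ B) = Γ₁ A ⊗ₖ Γ₂ B) :
    davCh Λ₁₂ Γ₁₂ ≤ davCh Λ₁ Γ₁ + davCh Λ₂ Γ₂ :=
  statement12_general d d' Λ₁ Γ₁ Λ₂ Γ₂ hΓ₁ hΛ₂ Λ₁₂ Γ₁₂ hΛ₁₂ hΓ₁₂
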